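/- Suppose V : [0,∞) → [0,M] satisfies, for all 0 ≤ y < x: V(y) ≤ e^{-(δ+λ)(x-y)/c}(V(x) + ε) + (1 - e^{-λ(x-y)/c}) M for every ε > 0, and V(y) ≥ V(x). Then V is Lipschitz continuous on [0,∞) with Lipschitz constant at most M(2λ+δ)/c. -/
import Mathlib


open Real

/-- Lipschitz continuity of the value function: if `V : [0,∞) → [0,M]` satisfies the
ε-optimality comparison inequality and is monotone decreasing, then `V` is Lipschitz
with constant at most `M * (2λ + δ) / c`. -/
theorem stmt_2 (del lam c M : ℝ) (hdel : 0 < del) (hlam : 0 < lam) (hc : 0 < c)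
    (hM : 0 < M) (V : ℝ → ℝ)
    (hVrange : ∀ x, 0 ≤ x → 0 ≤ V x ∧ V x ≤ M)
    (hineq : ∀ x y : ℝ, 0 ≤ y → y < x → ∀ ε > 0,
      V y ≤ Real.exp (-(del + lam) * (x - y) / c) * (V x + ε)
            + (1 - Real.exp (-lam * (x - y) / c)) * M)
    (hmono : ∀ x y : ℝ, 0 ≤ y → y < x → V x ≤ V y) :
    ∀ x y : ℝ, 0 ≤ y → 0 ≤ x → |V x - V y| ≤ M * (2 * lam + del) / c * |x - y| := by
  have key : ∀ x y : ℝ, 0 ≤ y → y < x →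
      V y - V x ≤ M * (2 * lam + del) / c * (x - y) := by
    intro x y hy hxy
    set t := x - y with ht
    have htpos : 0 < t := by simp [ht]; linarith
    have hE1 : Real.exp (-(del + lam) * t / c) ≤ 1 := by
      rw [Real.exp_le_one_iff, neg_mul, neg_div, neg_nonpos]
      positivity
    have hVx : 0 ≤ V x := (hVrange x (by linarith)).1
    have h1 : V y ≤ Real.exp (-(del + lam) * t / c) * V x
        + (1 - Real.exp (-lam * t / c)) * M := by
      apply le_of_forall_pos_le_add
      intro ε hε
      have h := hineq x y hy hxy ε hε
      nlinarith [hE1, Real.exp_pos (-(del + lam) * t / c)]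
    have h2 : 1 - Real.exp (-lam * t / c) ≤ lam * t / c := by
      have heq : -lam * t / c = -(lam * t / c) := by ring
      rw [heq]
      have := Real.add_one_le_exp (-(lam * t / c))
      linarith
    have h3 : V y - V x ≤ lam * t / c * M := by
      nlinarith [Real.exp_pos (-lam * t / c)]
    have h4 : lam * t / c * M ≤ M * (2 * lam + del) / c * t := by
      rw [div_mul_eq_mul_div, div_mul_eq_mul_div, div_le_div_iff₀ hc hc]
      nlinarith [mul_nonneg (mul_nonneg (mul_nonneg (by linarith : (0:ℝ) ≤ lam + del) hM.le) htpos.le) hc.le]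
    linarith
  intro x y hy hx
  rcases lt_trichotomy x y with h | h | h
  · rw [abs_of_nonneg (by linarith [hmono y x hx h] : 0 ≤ V x - V y),
      abs_of_nonpos (by linarith : x - y ≤ 0)]
    have := key y x hx h
    linarith
  · simp [h]
  · rw [abs_of_nonpos (by linarith [hmono x y hy h] : V x - V y ≤ 0),
      abs_of_nonneg (by linarith : 0 ≤ x - y)]
    have := key x y hy h
    linarith
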